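/- Let (p_b, p_1, …, p_k) be probability densities on ℝ^n that are Factorized Conditionals with respect to a partition {M_b, M_1, …, M_k}. Then for every σ > 0 the Gaussian-noised densities (N_σ[p_b], N_σ[p_1], …, N_σ[p_k]) are again Factorized Conditionals with respect to the same partition, and the composition operator commutes with Gaussian noising: C[N_σ[p_b], N_σ[p_1], …, N_σ[p_k]] = N_σ[C[p_b, p_1, …, p_k]]. -/

import Mathlib

open MeasureTheory Finset Real

noncomputable section

/-- The marginal density of `p` on the coordinates in `S`. -/
def marginal {n : ℕ} (S : Finset (Fin n)) (p : (Fin n → ℝ) → ℝ) (x : Fin n → ℝ) : ℝ :=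
  ∫ y : {i : Fin n // i ∉ S} → ℝ,
    p (fun i => if h : i ∈ S then x i else y ⟨i, h⟩)

/-- `p` is a probability density on `ℝ^n`. -/
def IsDensity {n : ℕ} (p : (Fin n → ℝ) → ℝ) : Prop :=
  (∀ x, 0 ≤ p x) ∧ Integrable p ∧ (∫ x, p x) = 1

/-- `Mb, M 1, …, M k` form a partition of the coordinates `{1,…,n}`. -/
def IsCoordPartition {n k : ℕ} (Mb : Finset (Fin n)) (M : Fin k → Finset (Fin n)) : Prop :=
  (∀ i, Disjoint Mb (M i)) ∧ (∀ i j, i ≠ j → Disjoint (M i) (M j)) ∧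
    Mb ∪ Finset.univ.biUnion M = Finset.univ

/-- Factorized Conditionals. -/
def FactorizedConditionals {n k : ℕ} (Mb : Finset (Fin n)) (M : Fin k → Finset (Fin n))
    (pb : (Fin n → ℝ) → ℝ) (p : Fin k → (Fin n → ℝ) → ℝ) : Prop :=
  IsCoordPartition Mb M ∧
  (∀ i x, p i x = marginal (M i) (p i) x * marginal (M i)ᶜ pb x) ∧
  (∀ x, pb x = marginal Mb pb x * ∏ i, marginal (M i) pb x)

/-- The unnormalized composition `pb(x) ∏ i, p i (x) / pb(x)`. -/
def compRaw {n k : ℕ} (pb : (Fin n → ℝ) → ℝ) (p : Fin k → (Fin n → ℝ) → ℝ)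
    (x : Fin n → ℝ) : ℝ :=
  pb x * ∏ i, p i x / pb x

/-- The composition operator `C[pb, p 1, …, p k]`, normalized to a probability density. -/
def comp {n k : ℕ} (pb : (Fin n → ℝ) → ℝ) (p : Fin k → (Fin n → ℝ) → ℝ)
    (x : Fin n → ℝ) : ℝ :=
  compRaw pb p x / ∫ y, compRaw pb p y

/-- The isotropic Gaussian density `N(0, σ² I)` on `ℝ^n`. -/
def gaussIso {n : ℕ} (σ : ℝ) (x : Fin n → ℝ) : ℝ :=
  (2 * π * σ ^ 2) ^ (-(n : ℝ) / 2) * Real.exp (-(∑ i, (x i) ^ 2) / (2 * σ ^ 2))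

/-- Gaussian noising `N_σ[p]`: convolution of `p` with `N(0, σ² I)`. -/
def noise {n : ℕ} (σ : ℝ) (p : (Fin n → ℝ) → ℝ) (x : Fin n → ℝ) : ℝ :=
  ∫ y, p y * gaussIso σ (x - y)

/-!
Write `pb = β ∏ ψᵢ`, where `β` and `ψᵢ` are the marginals of `pb` on `Mb` and `Mᵢ`. The
conditions on the `pᵢ` say `pᵢ = φᵢ · β ∏_{j ≠ i} ψⱼ` with `φᵢ` a function of the
`Mᵢ`-coordinates, and then the composition is `β ∏ φᵢ`. Under a density that is a product of
functions of disjoint coordinate blocks the blocks are independent, and the expectation of a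
function of one block sees only that block's factor, up to a constant fixed by normalisation.
The isotropic Gaussian is a product over coordinates, so the marginal of `N_σ[q]` on a block
`S` is `q` noised in the `S`-coordinates only. For these block products the noised marginals
therefore factor block by block, which yields both the Factorized Conditionals of the noised
densities and `C[N_σ[pb], N_σ[p₁], …] = N_σ[C[pb, p₁, …]]`.
-/

open ProbabilityTheory
open scoped NNReal

theorem DependsOn.mul {ι : Type*} {α : ι → Type*} {β : Type*} [Mul β]
    {f g : (Π i, α i) → β} {s : Set ι} (hf : DependsOn f s) (hg : DependsOn g s) :
    DependsOn (fun x => f x * g x) s :=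
  fun _ _ h => congrArg₂ (· * ·) (hf h) (hg h)

theorem DependsOn.finset_prod {ι κ : Type*} {α : ι → Type*} {β : Type*} [CommMonoid β]
    {s : Set ι} (t : Finset κ) {f : κ → (Π i, α i) → β} (hf : ∀ j ∈ t, DependsOn (f j) s) :
    DependsOn (fun x => ∏ j ∈ t, f j x) s :=
  fun _ _ h => Finset.prod_congr rfl fun j hj => hf j hj h

theorem integral_integral_mul_of_integral_eq_one {α β : Type*} [MeasurableSpace α]
    [MeasurableSpace β] {μ : Measure α} {ν : Measure β} [SFinite μ] [SFinite ν]
    {Q : α → ℝ} {K : β → α → ℝ} (hQ : Integrable Q μ)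
    (hK : AEStronglyMeasurable (Function.uncurry K) (ν.prod μ)) (hK0 : ∀ b a, 0 ≤ K b a)
    (hK1 : ∀ a, ∫ b, K b a ∂ν = 1) :
    ∫ b, ∫ a, Q a * K b a ∂μ ∂ν = ∫ a, Q a ∂μ := by
  have hint : Integrable (Function.uncurry fun b a => Q a * K b a) (ν.prod μ) := by
    refine (integrable_prod_iff' (hQ.aestronglyMeasurable.comp_snd.mul hK)).2
      ⟨ae_of_all _ fun a => ?_, ?_⟩
    · exact (Integrable.of_integral_ne_zero (f := fun b => K b a)
        (by rw [hK1]; exact one_ne_zero)).const_mul (Q a)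
    · simpa [norm_mul, Real.norm_of_nonneg (hK0 _ _), integral_const_mul, hK1] using hQ.norm
  rw [integral_integral_swap hint]
  simp [integral_const_mul, hK1]

section GaussianKernel

variable {n : ℕ}

theorem gaussianPDFReal_le (m : ℝ) (v : ℝ≥0) (x : ℝ) :
    gaussianPDFReal m v x ≤ (√(2 * π * v))⁻¹ := by
  refine mul_le_of_le_one_right (by positivity) (Real.exp_le_one_iff.2 ?_)
  exact div_nonpos_of_nonpos_of_nonneg (neg_nonpos.2 (sq_nonneg _)) (by positivity)

theorem integral_prod_gaussianPDFReal {ι : Type*} [Fintype ι] (m : ι → ℝ) {v : ℝ≥0}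
    (hv : v ≠ 0) : ∫ w : ι → ℝ, ∏ i, gaussianPDFReal (m i) v (w i) = 1 := by
  rw [integral_fintype_prod_volume_eq_prod (f := fun i => gaussianPDFReal (m i) v)]
  simp [integral_gaussianPDFReal_eq_one _ hv]

def gaussKernel (v : ℝ≥0) (S : Finset (Fin n)) (x y : Fin n → ℝ) : ℝ :=
  ∏ i ∈ S, gaussianPDFReal (y i) v (x i)

/-- Gaussian noise of variance `v` on the coordinates in `S` only, the other coordinates being
integrated out: by `marginal_noise` this is the `S`-marginal of the noised density. -/
def noiseOn (v : ℝ≥0) (S : Finset (Fin n)) (q : (Fin n → ℝ) → ℝ) (x : Fin n → ℝ) : ℝ :=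
  ∫ y, q y * gaussKernel v S x y

variable {v : ℝ≥0} {S T : Finset (Fin n)}

theorem gaussKernel_pos (hv : v ≠ 0) (S : Finset (Fin n)) (x y : Fin n → ℝ) :
    0 < gaussKernel v S x y :=
  Finset.prod_pos fun _ _ => gaussianPDFReal_pos _ _ _ hv

theorem gaussKernel_union (hST : Disjoint S T) (x y : Fin n → ℝ) :
    gaussKernel v (S ∪ T) x y = gaussKernel v S x y * gaussKernel v T x y :=
  Finset.prod_union hST

theorem dependsOn_gaussKernel (v : ℝ≥0) (S : Finset (Fin n)) (x : Fin n → ℝ) :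
    DependsOn (gaussKernel v S x) S :=
  fun _ _ h => Finset.prod_congr rfl fun i hi => by rw [h i hi]

theorem measurable_gaussKernel (v : ℝ≥0) (S : Finset (Fin n)) (x : Fin n → ℝ) :
    Measurable (gaussKernel v S x) := by
  unfold gaussKernel
  fun_prop

theorem integrable_mul_gaussKernel {q : (Fin n → ℝ) → ℝ} (hq : Integrable q)
    (v : ℝ≥0) (S : Finset (Fin n)) (x : Fin n → ℝ) :
    Integrable (fun y => q y * gaussKernel v S x y) := by
  refine hq.mul_bdd (measurable_gaussKernel v S x).aestronglyMeasurable
    (c := (√(2 * π * v))⁻¹ ^ S.card) (ae_of_all _ fun y => ?_)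
  rw [gaussKernel, Real.norm_of_nonneg (Finset.prod_nonneg fun _ _ => gaussianPDFReal_nonneg ..),
    ← Finset.prod_const]
  exact Finset.prod_le_prod (fun _ _ => gaussianPDFReal_nonneg _ _ _)
    fun _ _ => gaussianPDFReal_le _ _ _

theorem gaussIso_sub_eq_gaussKernel {σ : ℝ} (hv : (v : ℝ) = σ ^ 2) (x y : Fin n → ℝ) :
    gaussIso σ (x - y) = gaussKernel v Finset.univ x y := by
  simp only [gaussKernel, gaussIso, gaussianPDFReal, hv, Finset.prod_mul_distrib,
    Finset.prod_const, Finset.card_univ, Fintype.card_fin, ← Real.exp_sum, Pi.sub_apply,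
    ← Finset.sum_div, Finset.sum_neg_distrib]
  congr 1
  rw [Real.sqrt_eq_rpow, ← Real.rpow_neg (by positivity),
    ← Real.rpow_mul_natCast (by positivity)]
  ring_nf

end GaussianKernel

section Noise

variable {n : ℕ} {v : ℝ≥0} {σ : ℝ}

theorem noise_eq_noiseOn_univ (hv : (v : ℝ) = σ ^ 2) (q : (Fin n → ℝ) → ℝ) :
    noise σ q = noiseOn v Finset.univ q :=
  funext fun x => by simp only [noise, noiseOn, gaussIso_sub_eq_gaussKernel hv]

theorem integral_noise (hv : (v : ℝ) = σ ^ 2) (hv0 : v ≠ 0) {q : (Fin n → ℝ) → ℝ}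
    (hq : Integrable q) : ∫ x, noise σ q x = ∫ y, q y := by
  simp only [noise, gaussIso_sub_eq_gaussKernel hv]
  refine integral_integral_mul_of_integral_eq_one hq ?_
    (fun _ _ => (gaussKernel_pos hv0 _ _ _).le) fun y => integral_prod_gaussianPDFReal _ hv0
  unfold gaussKernel
  apply Measurable.aestronglyMeasurable
  fun_prop

theorem marginal_noise (hv : (v : ℝ) = σ ^ 2) (hv0 : v ≠ 0) {q : (Fin n → ℝ) → ℝ}
    (hq : Integrable q) (S : Finset (Fin n)) (x : Fin n → ℝ) :
    marginal S (noise σ q) x = noiseOn v S q x := by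
  have hsplit : ∀ (w : {i // i ∉ S} → ℝ) y,
      gaussIso σ ((fun i => if h : i ∈ S then x i else w ⟨i, h⟩) - y) =
      gaussKernel v S x y * ∏ i : {i // i ∉ S}, gaussianPDFReal (y i) v (w i) := by
    intro w y
    rw [gaussIso_sub_eq_gaussKernel hv, gaussKernel, gaussKernel,
      ← Finset.prod_mul_prod_compl S, Finset.prod_subtype Sᶜ (fun _ => Finset.mem_compl)]
    congr 1
    · exact Finset.prod_congr rfl fun i hi => by simp [hi]
    · exact Finset.prod_congr rfl fun i _ => by simp [i.2]
  calc marginal S (noise σ q) x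
      = ∫ w : {i // i ∉ S} → ℝ, ∫ y, (q y * gaussKernel v S x y) *
          ∏ i : {i // i ∉ S}, gaussianPDFReal (y i) v (w i) := by
        refine integral_congr_ae (ae_of_all _ fun w =>
          integral_congr_ae (ae_of_all _ fun y => ?_))
        simp only [hsplit, mul_assoc]
    _ = noiseOn v S q x :=
        integral_integral_mul_of_integral_eq_one (integrable_mul_gaussKernel hq v S x)
          (by apply Measurable.aestronglyMeasurable; fun_prop)
          (fun _ _ => Finset.prod_nonneg fun _ _ => gaussianPDFReal_nonneg _ _ _)
          fun y => integral_prod_gaussianPDFReal (fun i : {i // i ∉ S} => y i) hv0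

theorem noiseOn_pos (hv0 : v ≠ 0) {q : (Fin n → ℝ) → ℝ} (hq : Integrable q)
    (hq0 : ∀ y, 0 < q y) (S : Finset (Fin n)) (x : Fin n → ℝ) : 0 < noiseOn v S q x := by
  have hpos : ∀ y, 0 < q y * gaussKernel v S x y :=
    fun y => mul_pos (hq0 y) (gaussKernel_pos hv0 S x y)
  rw [noiseOn, integral_pos_iff_support_of_nonneg (fun y => (hpos y).le)
    (integrable_mul_gaussKernel hq v S x), Function.support_eq_univ fun y => (hpos y).ne']
  exact Measure.measure_univ_pos.2 (NeZero.ne _)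

end Noise

section Factorization

variable {n : ℕ} {S T : Finset (Fin n)}

theorem dependsOn_marginal (S : Finset (Fin n)) (p : (Fin n → ℝ) → ℝ) :
    DependsOn (marginal S p) S := by
  intro x y h
  refine integral_congr_ae (ae_of_all _ fun b => congrArg p (funext fun i => ?_))
  split_ifs with hi
  exacts [h i hi, rfl]

theorem marginal_compl_mul_of_dependsOn {f g : (Fin n → ℝ) → ℝ} (hf : DependsOn f S)
    (hg : DependsOn g ↑Sᶜ) (x : Fin n → ℝ) :
    marginal Sᶜ (fun y => f y * g y) x =
      (∫ b : {i // i ∉ Sᶜ} → ℝ, f fun i => if h : i ∈ Sᶜ then 0 else b ⟨i, h⟩) * g x := by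
  rw [marginal, ← integral_mul_const]
  refine integral_congr_ae (ae_of_all _ fun b => ?_)
  dsimp only
  congr 1
  · exact hf fun i hi => by simp [Finset.mem_coe.1 hi]
  · exact hg fun i hi => by simp [Finset.mem_coe.1 hi]

theorem integral_mul_of_dependsOn {f g : (Fin n → ℝ) → ℝ} (hf : DependsOn f S)
    (hg : DependsOn g ↑Sᶜ) :
    ∫ y, f y * g y =
      (∫ a : {i // i ∈ S} → ℝ, f fun i => if h : i ∈ S then a ⟨i, h⟩ else 0) *
        ∫ b : {i // i ∉ S} → ℝ, g fun i => if h : i ∈ S then 0 else b ⟨i, h⟩ := by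
  rw [← (volume_preserving_piEquivPiSubtypeProd (fun _ : Fin n => ℝ) (· ∈ S)).symm.integral_comp
    (MeasurableEquiv.measurableEmbedding _), Measure.volume_eq_prod]
  -- the two sides carry different (but equal) `Fintype` instances on `{i // i ∈ S}`
  convert integral_prod_mul (μ := volume) (ν := volume)
    (fun a : {i // i ∈ S} → ℝ => f fun i => if h : i ∈ S then a ⟨i, h⟩ else 0)
    (fun b : {i // i ∉ S} → ℝ => g fun i => if h : i ∈ S then 0 else b ⟨i, h⟩) using 2
  · rfl
  · congr!
  · ext z
    congr 1
    · exact hf fun i hi => by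
        simp [MeasurableEquiv.piEquivPiSubtypeProd, Finset.mem_coe.1 hi]
    · exact hg fun i hi => by
        simp [MeasurableEquiv.piEquivPiSubtypeProd, Finset.mem_compl.1 hi]

theorem integral_mul_mul_integral_mul_comm (hST : IsCompl S T) {f f' g g' : (Fin n → ℝ) → ℝ}
    (hf : DependsOn f S) (hf' : DependsOn f' S) (hg : DependsOn g T) (hg' : DependsOn g' T) :
    (∫ y, f y * g' y) * ∫ y, f' y * g y = (∫ y, f y * g y) * ∫ y, f' y * g' y := by
  obtain rfl : Sᶜ = T := hST.compl_eq
  rw [integral_mul_of_dependsOn hf hg, integral_mul_of_dependsOn hf hg',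
    integral_mul_of_dependsOn hf' hg, integral_mul_of_dependsOn hf' hg']
  ring

theorem integral_mul_congr_of_isCompl (hST : IsCompl S T) {f f' g g' : (Fin n → ℝ) → ℝ}
    (hf : DependsOn f S) (hf' : DependsOn f' S) (hg : DependsOn g T) (hg' : DependsOn g' T)
    (h : ∫ y, f y * g y = ∫ y, f' y * g y) (h0 : ∫ y, f y * g y ≠ 0) :
    ∫ y, f y * g' y = ∫ y, f' y * g' y := by
  have key := integral_mul_mul_integral_mul_comm hST hf hf' hg hg'
  rw [← h, mul_comm (∫ y, f y * g y)] at key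
  exact mul_right_cancel₀ h0 key

theorem integral_mul_mul_of_isCompl (hST : IsCompl S T) {q f g φ ψ : (Fin n → ℝ) → ℝ}
    (hf : DependsOn f S) (hg : DependsOn g T) (hq : ∀ y, q y = f y * g y)
    (hq1 : ∫ y, q y = 1) (hφ : DependsOn φ S) (hψ : DependsOn ψ T) :
    ∫ y, q y * (φ y * ψ y) = (∫ y, q y * φ y) * ∫ y, q y * ψ y := by
  have key := integral_mul_mul_integral_mul_comm hST (hf.mul hφ) hf hg (hg.mul hψ)
  simp only [← hq, hq1, mul_one] at key
  calc ∫ y, q y * (φ y * ψ y) = ∫ y, f y * φ y * (g y * ψ y) := by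
        congr 1 with y; rw [hq]; ring
    _ = (∫ y, f y * φ y * g y) * ∫ y, f y * (g y * ψ y) := key
    _ = (∫ y, q y * φ y) * ∫ y, q y * ψ y := by
        congr 1 <;> congr 1 with y <;> rw [hq] <;> ring

variable {v : ℝ≥0}

theorem noiseOn_union_of_isCompl (hST : IsCompl S T) {q f g : (Fin n → ℝ) → ℝ}
    (hf : DependsOn f S) (hg : DependsOn g T) (hq : ∀ y, q y = f y * g y)
    (hq1 : ∫ y, q y = 1) {A B : Finset (Fin n)} (hA : A ⊆ S) (hB : B ⊆ T) (x : Fin n → ℝ) :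
    noiseOn v (A ∪ B) q x = noiseOn v A q x * noiseOn v B q x := by
  simp only [noiseOn, gaussKernel_union (hST.disjoint.mono hA hB)]
  exact integral_mul_mul_of_isCompl hST hf hg hq hq1
    ((dependsOn_gaussKernel v A x).mono (Finset.coe_subset.2 hA))
    ((dependsOn_gaussKernel v B x).mono (Finset.coe_subset.2 hB))

theorem noiseOn_congr_of_isCompl (hST : IsCompl S T) {q q' f f' g : (Fin n → ℝ) → ℝ}
    (hf : DependsOn f S) (hf' : DependsOn f' S) (hg : DependsOn g T)
    (hq : ∀ y, q y = f y * g y) (hq' : ∀ y, q' y = f' y * g y)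
    (h : ∫ y, q y = ∫ y, q' y) (h0 : ∫ y, q y ≠ 0) {B : Finset (Fin n)} (hB : B ⊆ T)
    (x : Fin n → ℝ) : noiseOn v B q x = noiseOn v B q' x := by
  simp only [hq, hq'] at h h0
  simp only [noiseOn, hq, hq', mul_assoc]
  exact integral_mul_congr_of_isCompl hST hf hf' hg
    (hg.mul ((dependsOn_gaussKernel v B x).mono (Finset.coe_subset.2 hB))) h h0

end Factorization

section Composition

variable {n k : ℕ} {pb : (Fin n → ℝ) → ℝ} {p : Fin k → (Fin n → ℝ) → ℝ}

theorem compRaw_apply_eq {x : Fin n → ℝ} {B : ℝ} {a b C : Fin k → ℝ}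
    (hB : pb x = B * ∏ i, a i) (ha : ∀ i, pb x = a i * C i) (hb : ∀ i, p i x = b i * C i)
    (h0 : pb x ≠ 0) : compRaw pb p x = B * ∏ i, b i := by
  have haC : ∀ i, a i ≠ 0 ∧ C i ≠ 0 := fun i => mul_ne_zero_iff.1 (ha i ▸ h0)
  have hdiv : ∀ i, p i x / pb x = b i / a i := fun i => by
    rw [hb, ha i, mul_div_mul_right _ _ (haC i).2]
  have hprod : ∏ i, a i ≠ 0 := Finset.prod_ne_zero_iff.2 fun i _ => (haC i).1
  rw [compRaw, Finset.prod_congr rfl fun i _ => hdiv i, Finset.prod_div_distrib, hB]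
  field_simp

end Composition

section BlockProduct

variable {n k : ℕ} {Mb : Finset (Fin n)} {M : Fin k → Finset (Fin n)}
  {β : (Fin n → ℝ) → ℝ} {χ : Fin k → (Fin n → ℝ) → ℝ}

def blockProd (β : (Fin n → ℝ) → ℝ) (χ : Fin k → (Fin n → ℝ) → ℝ) (x : Fin n → ℝ) : ℝ :=
  β x * ∏ i, χ i x

def blockProdErase (β : (Fin n → ℝ) → ℝ) (χ : Fin k → (Fin n → ℝ) → ℝ) (i : Fin k)
    (x : Fin n → ℝ) : ℝ :=
  β x * ∏ j ∈ Finset.univ.erase i, χ j x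

theorem blockProd_eq_mul (i : Fin k) (x : Fin n → ℝ) :
    blockProd β χ x = χ i x * blockProdErase β χ i x := by
  rw [blockProd, blockProdErase, ← Finset.mul_prod_erase _ _ (Finset.mem_univ i)]
  ring

theorem blockProd_update (i : Fin k) (φ : (Fin n → ℝ) → ℝ) (x : Fin n → ℝ) :
    blockProd β (Function.update χ i φ) x = φ x * blockProdErase β χ i x := by
  rw [blockProd_eq_mul i, Function.update_self, blockProdErase, blockProdErase]
  congr 2
  exact Finset.prod_congr rfl fun j hj => by
    rw [Function.update_of_ne (Finset.ne_of_mem_erase hj)]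

theorem dependsOn_prod_blocks (hP : IsCoordPartition Mb M)
    (hχ : ∀ i, DependsOn (χ i) (M i)) : DependsOn (fun x => ∏ i, χ i x) ↑Mbᶜ :=
  DependsOn.finset_prod _ fun i _ => (hχ i).mono <| Finset.coe_subset.2 <|
    le_compl_iff_disjoint_right.2 (hP.1 i).symm

theorem dependsOn_blockProdErase (hP : IsCoordPartition Mb M) (hβ : DependsOn β Mb)
    (hχ : ∀ i, DependsOn (χ i) (M i)) (i : Fin k) :
    DependsOn (blockProdErase β χ i) ↑(M i)ᶜ :=
  (hβ.mono (Finset.coe_subset.2 (le_compl_iff_disjoint_right.2 (hP.1 i)))).mul <|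
    DependsOn.finset_prod _ fun j hj => (hχ j).mono <| Finset.coe_subset.2 <|
      le_compl_iff_disjoint_right.2 (hP.2.1 j i (Finset.ne_of_mem_erase hj))

variable {v : ℝ≥0}

theorem noiseOn_univ_blockProd (hP : IsCoordPartition Mb M) (hβ : DependsOn β Mb)
    (hχ : ∀ i, DependsOn (χ i) (M i)) (h1 : ∫ y, blockProd β χ y = 1) (x : Fin n → ℝ) :
    noiseOn v Finset.univ (blockProd β χ) x =
      noiseOn v Mb (blockProd β χ) x * ∏ i, noiseOn v (M i) (blockProd β χ) x := by
  suffices ∀ s : Finset (Fin k), noiseOn v (Mb ∪ s.biUnion M) (blockProd β χ) x =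
      noiseOn v Mb (blockProd β χ) x * ∏ i ∈ s, noiseOn v (M i) (blockProd β χ) x by
    simpa [hP.2.2] using this Finset.univ
  intro s
  induction s using Finset.induction_on with
  | empty => simp
  | insert j s hj ih =>
    have hsub : Mb ∪ s.biUnion M ⊆ (M j)ᶜ := Finset.union_subset
      (le_compl_iff_disjoint_right.2 (hP.1 j)) <| Finset.biUnion_subset.2 fun i hi =>
        le_compl_iff_disjoint_right.2 (hP.2.1 i j (ne_of_mem_of_not_mem hi hj))
    rw [Finset.biUnion_insert, Finset.union_left_comm,
      noiseOn_union_of_isCompl isCompl_compl (hχ j) (dependsOn_blockProdErase hP hβ hχ j)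
        (blockProd_eq_mul j) h1 subset_rfl hsub, ih, Finset.prod_insert hj]
    ring

theorem noiseOn_univ_blockProd_eq_mul_compl (hP : IsCoordPartition Mb M)
    (hβ : DependsOn β Mb) (hχ : ∀ i, DependsOn (χ i) (M i)) (h1 : ∫ y, blockProd β χ y = 1)
    (i : Fin k) (x : Fin n → ℝ) :
    noiseOn v Finset.univ (blockProd β χ) x =
      noiseOn v (M i) (blockProd β χ) x * noiseOn v (M i)ᶜ (blockProd β χ) x := by
  rw [← Finset.union_compl (M i)]
  exact noiseOn_union_of_isCompl isCompl_compl (hχ i) (dependsOn_blockProdErase hP hβ hχ i)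
    (blockProd_eq_mul i) h1 subset_rfl subset_rfl x

variable {ψ φ : Fin k → (Fin n → ℝ) → ℝ}

theorem compRaw_blockProd {x : Fin n → ℝ} (h0 : blockProd β ψ x ≠ 0) :
    compRaw (blockProd β ψ) (fun i => blockProd β (Function.update ψ i (φ i))) x =
      blockProd β φ x :=
  compRaw_apply_eq (a := fun i => ψ i x) (C := fun i => blockProdErase β ψ i x) rfl
    (fun i => blockProd_eq_mul i x) (fun i => blockProd_update i (φ i) x) h0

theorem noiseOn_univ_blockProd_update (hP : IsCoordPartition Mb M) (hβ : DependsOn β Mb)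
    (hψ : ∀ i, DependsOn (ψ i) (M i)) (hφ : ∀ i, DependsOn (φ i) (M i))
    (h0 : ∫ y, blockProd β ψ y = 1)
    (h : ∀ i, ∫ y, blockProd β (Function.update ψ i (φ i)) y = 1) (i : Fin k)
    (x : Fin n → ℝ) :
    noiseOn v Finset.univ (blockProd β (Function.update ψ i (φ i))) x =
      noiseOn v (M i) (blockProd β (Function.update ψ i (φ i))) x *
        noiseOn v (M i)ᶜ (blockProd β ψ) x := by
  rw [← Finset.union_compl (M i), noiseOn_union_of_isCompl isCompl_compl (hφ i)
    (dependsOn_blockProdErase hP hβ hψ i) (blockProd_update i (φ i)) (h i) subset_rfl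
    subset_rfl x]
  congr 1
  exact noiseOn_congr_of_isCompl isCompl_compl (hφ i) (hψ i)
    (dependsOn_blockProdErase hP hβ hψ i) (blockProd_update i (φ i)) (blockProd_eq_mul i)
    ((h i).trans h0.symm) (by rw [h i]; exact one_ne_zero) subset_rfl x

theorem integral_blockProd_eq_one (hP : IsCoordPartition Mb M) (hβ : DependsOn β Mb)
    (hψ : ∀ i, DependsOn (ψ i) (M i)) (hφ : ∀ i, DependsOn (φ i) (M i))
    (h0 : ∫ y, blockProd β ψ y = 1)
    (h : ∀ i, ∫ y, blockProd β (Function.update ψ i (φ i)) y = 1) :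
    ∫ y, blockProd β φ y = 1 := by
  -- replace the factors `ψ i` by `φ i` one block at a time
  suffices ∀ s : Finset (Fin k), ∫ y, blockProd β (s.piecewise φ ψ) y = 1 by
    simpa using this Finset.univ
  intro s
  induction s using Finset.induction_on with
  | empty => simpa using h0
  | insert j s hj ih =>
    set χ := s.piecewise φ ψ
    have hχ : ∀ i, DependsOn (χ i) (M i) := fun i => by
      by_cases hi : i ∈ s
      · simpa [χ, hi] using hφ i
      · simpa [χ, hi] using hψ i
    have hχj : χ j = ψ j := Finset.piecewise_eq_of_notMem _ _ _ hj
    simp only [blockProd_eq_mul j (χ := χ), hχj] at ih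
    simp only [blockProd_update, blockProd_eq_mul j (χ := ψ)] at h h0
    rw [Finset.piecewise_insert]
    simp only [blockProd_update]
    rw [← ih]
    exact integral_mul_congr_of_isCompl isCompl_compl (hφ j) (hψ j)
      (dependsOn_blockProdErase hP hβ hψ j) (dependsOn_blockProdErase hP hβ hχ j)
      ((h j).trans h0.symm) (by rw [h j]; exact one_ne_zero)

theorem noiseOn_univ_blockProd_eq (hP : IsCoordPartition Mb M) (hβ : DependsOn β Mb)
    (hψ : ∀ i, DependsOn (ψ i) (M i)) (hφ : ∀ i, DependsOn (φ i) (M i))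
    (h0 : ∫ y, blockProd β ψ y = 1)
    (h : ∀ i, ∫ y, blockProd β (Function.update ψ i (φ i)) y = 1) (x : Fin n → ℝ) :
    noiseOn v Finset.univ (blockProd β φ) x = noiseOn v Mb (blockProd β ψ) x *
      ∏ i, noiseOn v (M i) (blockProd β (Function.update ψ i (φ i))) x := by
  have h1 := integral_blockProd_eq_one hP hβ hψ hφ h0 h
  rw [noiseOn_univ_blockProd hP hβ hφ h1]
  congr 1
  · exact noiseOn_congr_of_isCompl (q := blockProd β φ) (q' := blockProd β ψ)
      isCompl_compl.symm (dependsOn_prod_blocks hP hφ) (dependsOn_prod_blocks hP hψ) hβ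
      (fun y => mul_comm _ _) (fun y => mul_comm _ _) (h1.trans h0.symm)
      (by rw [h1]; exact one_ne_zero) subset_rfl x
  · refine Finset.prod_congr rfl fun i _ => noiseOn_congr_of_isCompl isCompl_compl.symm
      (dependsOn_blockProdErase hP hβ hφ i) (dependsOn_blockProdErase hP hβ hψ i) (hφ i)
      (fun y => ?_) (fun y => ?_) (h1.trans (h i).symm) (by rw [h1]; exact one_ne_zero)
      subset_rfl x
    · rw [blockProd_eq_mul i, mul_comm]
    · rw [blockProd_update, mul_comm]

end BlockProduct

section FactorizedConditionals

variable {n k : ℕ} {Mb : Finset (Fin n)} {M : Fin k → Finset (Fin n)}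

theorem FactorizedConditionals.exists_blockProd {pb : (Fin n → ℝ) → ℝ}
    {p : Fin k → (Fin n → ℝ) → ℝ} (hFC : FactorizedConditionals Mb M pb p) :
    ∃ (β : (Fin n → ℝ) → ℝ) (ψ φ : Fin k → (Fin n → ℝ) → ℝ), DependsOn β Mb ∧
      (∀ i, DependsOn (ψ i) (M i)) ∧ (∀ i, DependsOn (φ i) (M i)) ∧
      pb = blockProd β ψ ∧ p = fun i => blockProd β (Function.update ψ i (φ i)) := by
  obtain ⟨hP, hp, hpb⟩ := hFC
  have hβ : DependsOn (marginal Mb pb) Mb := dependsOn_marginal _ _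
  have hψ : ∀ j, DependsOn (marginal (M j) pb) (M j) := fun j => dependsOn_marginal _ _
  have hc : ∀ i, ∃ c : ℝ, ∀ x, marginal (M i)ᶜ pb x =
      c * blockProdErase (marginal Mb pb) (fun j => marginal (M j) pb) i x := fun i =>
    ⟨_, fun x => by
      rw [← marginal_compl_mul_of_dependsOn (hψ i) (dependsOn_blockProdErase hP hβ hψ i)]
      exact congrArg (marginal _ · x) (funext fun y => (hpb y).trans (blockProd_eq_mul i y))⟩
  choose c hc using hc
  refine ⟨_, _, fun i y => c i * marginal (M i) (p i) y, hβ, hψ, fun i _ _ h => ?_,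
    funext hpb, funext fun i => funext fun x => ?_⟩
  · simp only [dependsOn_marginal _ _ h]
  · rw [blockProd_update, hp, hc]
    ring

variable {β : (Fin n → ℝ) → ℝ} {ψ φ : Fin k → (Fin n → ℝ) → ℝ} {v : ℝ≥0} {σ : ℝ}

theorem factorizedConditionals_noise_blockProd (hv : (v : ℝ) = σ ^ 2) (hv0 : v ≠ 0)
    (hP : IsCoordPartition Mb M) (hβ : DependsOn β Mb) (hψ : ∀ i, DependsOn (ψ i) (M i))
    (hφ : ∀ i, DependsOn (φ i) (M i)) (h0 : ∫ y, blockProd β ψ y = 1)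
    (h : ∀ i, ∫ y, blockProd β (Function.update ψ i (φ i)) y = 1) :
    FactorizedConditionals Mb M (noise σ (blockProd β ψ))
      fun i => noise σ (blockProd β (Function.update ψ i (φ i))) := by
  have hmarg : ∀ q : (Fin n → ℝ) → ℝ, ∫ y, q y = 1 → ∀ S,
      marginal S (noise σ q) = noiseOn v S q := fun q hq S =>
    funext (marginal_noise hv hv0 (.of_integral_ne_zero (by rw [hq]; exact one_ne_zero)) S)
  refine ⟨hP, fun i x => ?_, fun x => ?_⟩
  · dsimp only
    rw [hmarg _ (h i), hmarg _ h0, noise_eq_noiseOn_univ hv]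
    exact noiseOn_univ_blockProd_update hP hβ hψ hφ h0 h i x
  · simp only [hmarg _ h0]
    rw [noise_eq_noiseOn_univ hv]
    exact noiseOn_univ_blockProd hP hβ hψ h0 x

theorem compRaw_noise_blockProd (hv : (v : ℝ) = σ ^ 2) (hv0 : v ≠ 0)
    (hP : IsCoordPartition Mb M) (hβ : DependsOn β Mb) (hψ : ∀ i, DependsOn (ψ i) (M i))
    (hφ : ∀ i, DependsOn (φ i) (M i)) (h0 : ∫ y, blockProd β ψ y = 1)
    (h : ∀ i, ∫ y, blockProd β (Function.update ψ i (φ i)) y = 1)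
    (hpos : ∀ x, 0 < blockProd β ψ x) (x : Fin n → ℝ) :
    compRaw (noise σ (blockProd β ψ)) (fun i => noise σ (blockProd β (Function.update ψ i (φ i))))
      x = noise σ (blockProd β φ) x := by
  have hint : Integrable (blockProd β ψ) := .of_integral_ne_zero (by rw [h0]; exact one_ne_zero)
  simp only [noise_eq_noiseOn_univ hv]
  rw [compRaw_apply_eq (noiseOn_univ_blockProd hP hβ hψ h0 x)
    (fun i => noiseOn_univ_blockProd_eq_mul_compl hP hβ hψ h0 i x)
    (fun i => noiseOn_univ_blockProd_update hP hβ hψ hφ h0 h i x)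
    (noiseOn_pos hv0 hint hpos _ x).ne', noiseOn_univ_blockProd_eq hP hβ hψ hφ h0 h x]

end FactorizedConditionals

/-- If `(pb, p 1, …, p k)` are Factorized Conditionals then so are their Gaussian-noised
versions (for every `σ > 0`, with the same partition), and the composition operator
commutes with Gaussian noising. -/
theorem statement_1 {n k : ℕ} (Mb : Finset (Fin n)) (M : Fin k → Finset (Fin n))
    (pb : (Fin n → ℝ) → ℝ) (p : Fin k → (Fin n → ℝ) → ℝ)
    (hpb : IsDensity pb) (hp : ∀ i, IsDensity (p i))
    (hpbpos : ∀ x, 0 < pb x)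
    (hFC : FactorizedConditionals Mb M pb p) :
    ∀ σ : ℝ, 0 < σ →
      FactorizedConditionals Mb M (noise σ pb) (fun i => noise σ (p i)) ∧
      (∀ x, comp (noise σ pb) (fun i => noise σ (p i)) x = noise σ (comp pb p) x) := by
  intro σ hσ
  have hv : ((σ ^ 2).toNNReal : ℝ) = σ ^ 2 := Real.coe_toNNReal _ (sq_nonneg σ)
  have hv0 : (σ ^ 2).toNNReal ≠ 0 := (Real.toNNReal_pos.2 (by positivity)).ne'
  obtain ⟨β, ψ, φ, hβ, hψ, hφ, rfl, rfl⟩ := hFC.exists_blockProd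
  have h0 : ∫ y, blockProd β ψ y = 1 := hpb.2.2
  have h : ∀ i, ∫ y, blockProd β (Function.update ψ i (φ i)) y = 1 := fun i => (hp i).2.2
  have h1 := integral_blockProd_eq_one hFC.1 hβ hψ hφ h0 h
  have hcomp : comp (blockProd β ψ) (fun i => blockProd β (Function.update ψ i (φ i))) =
      blockProd β φ :=
    funext fun y => by simp only [comp, compRaw_blockProd (hpbpos _).ne', h1, div_one]
  have hN := compRaw_noise_blockProd hv hv0 hFC.1 hβ hψ hφ h0 h hpbpos
  have hN1 : ∫ y, noise σ (blockProd β φ) y = 1 := by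
    rw [integral_noise hv hv0 (.of_integral_ne_zero (by rw [h1]; exact one_ne_zero)), h1]
  refine ⟨factorizedConditionals_noise_blockProd hv hv0 hFC.1 hβ hψ hφ h0 h, fun x => ?_⟩
  rw [comp, hcomp, funext hN, hN1, div_one]
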